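/- arXiv:2508.04860 — 5 statements merged into one kernel-verified Lean document; each statement's English description precedes it below -/
import Mathlib

section
/- For any p ∈ (1, 2] and vectors v, w ∈ ℝ^d with v ≠ 0, one has ‖v + w‖^p ≤ ‖v‖^p + p·⟨v, w⟩/‖v‖^(2−p) + 2^(2−p)·‖w‖^p. -/
open scoped RealInnerProductSpace

lemma tangent_le {x y q : ℝ} (hx : 0 ≤ x) (hy : 0 < y) (hq0 : 0 ≤ q) (hq1 : q ≤ 1) :
    x ^ q ≤ y ^ q + q * y ^ (q-1) * (x - y) := by
  have hs : (-1 : ℝ) ≤ x / y - 1 := by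
    have : 0 ≤ x / y := div_nonneg hx hy.le
    linarith
  have hb := rpow_one_add_le_one_add_mul_self hs hq0 hq1
  have e : 1 + (x/y - 1) = x/y := by ring
  rw [e] at hb
  have hyq : 0 < y ^ q := Real.rpow_pos_of_pos hy q
  have hdiv : (x/y)^q = x^q / y^q := Real.div_rpow hx hy.le q
  rw [hdiv, div_le_iff₀ hyq] at hb
  have hy1 : y ^ (q-1) = y ^ q / y := by rw [Real.rpow_sub hy, Real.rpow_one]
  have hyne : y ≠ 0 := hy.ne'
  calc x^q ≤ (1 + q*(x/y - 1)) * y^q := hb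
    _ = y^q + q * (y^q / y) * (x - y) := by field_simp
    _ = y^q + q * y^(q-1) * (x-y) := by rw [hy1]

lemma bern2 {q : ℝ} (hq0 : 0 ≤ q) (hq1 : q ≤ 1) : (2:ℝ) ^ q ≤ 1 + q := by
  have := rpow_one_add_le_one_add_mul_self (s := 1) (by norm_num) hq0 hq1
  norm_num at this
  linarith

lemma rpow_subadd {x y q : ℝ} (hx : 0 ≤ x) (hy : 0 ≤ y) (hq0 : 0 ≤ q) (hq1 : q ≤ 1) :
    (x + y) ^ q ≤ x ^ q + y ^ q := by
  have h := NNReal.rpow_add_le_add_rpow x.toNNReal y.toNNReal hq0 hq1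
  have h2 := NNReal.coe_le_coe.2 h
  rw [NNReal.coe_add, NNReal.coe_rpow, NNReal.coe_rpow, NNReal.coe_rpow, NNReal.coe_add,
    Real.coe_toNNReal x hx, Real.coe_toNNReal y hy] at h2
  exact h2

lemma key_A {p r c : ℝ} (hp1 : 1 ≤ p) (hp2 : p ≤ 2) (hr0 : 0 ≤ r) (hr : r ≤ 1/2)
    (hc0 : 0 < c) (hcp : c ≤ p) (hc3 : 2 ≤ c*(3-p)) :
    c*c*(1 - p/2*r) + p*(2-p+2*(p-1)*r) ≤ c*2 := by
  have h1 : 0 ≤ (3-p) * (c - (2-p)) := by nlinarith [sq_nonneg (p-2)]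
  have h2 : 0 ≤ c - (2-p) := nonneg_of_mul_nonneg_right h1 (by linarith)
  have hA0 : c*c + p*(2-p) - 2*c ≤ 0 := by
    nlinarith [mul_nonpos_of_nonpos_of_nonneg (by linarith : c - p ≤ 0) h2]
  have h4 : (0:ℝ) ≤ 4 - p := by linarith
  have h5 : 0 ≤ (3-p) * ((4-p)*c - 2*p) := by
    nlinarith [mul_nonneg (sub_nonneg.2 hc3) h4, sq_nonneg (p-2)]
  have h6 : 0 ≤ (4-p)*c - 2*p := nonneg_of_mul_nonneg_right h5 (by linarith)
  have hAh : c*c*(1 - p/4) + p*(2 - p + (p-1)) - 2*c ≤ 0 := by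
    nlinarith [mul_nonpos_of_nonpos_of_nonneg (by linarith : c - 2 ≤ 0) h6]
  nlinarith [mul_nonneg (by linarith : (0:ℝ) ≤ 1 - 2*r) (neg_nonneg.2 hA0),
    mul_nonneg hr0 (neg_nonneg.2 hAh)]

set_option maxHeartbeats 800000 in
lemma key_B {p r d : ℝ} (hp1 : 1 ≤ p) (hp2 : p ≤ 2) (hr : 1/2 ≤ r) (hr1 : r ≤ 1)
    (hd0 : 0 < d) (hdu : 2*d ≤ 2 + p) (hdl : 2 - 0.6931471808*(2-p) ≤ d) :
    (d*d*d/2)*(1 + p*(1/2-r)) + (2*p)*(2-p+2*(p-1)*r) ≤ (d*d)*2 := by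
  have hx0 : (0:ℝ) ≤ 2 - d := by linarith
  have hxs : 2 - d ≤ 0.6931471808 * (2 - p) := by linarith
  have hB1 : d*d*d/2 + 2*p ≤ 2*(d*d) := by
    have h : (0:ℝ) ≤ 2/0.6931471808 - 2 - (2-d) + (2-d)^2/2 := by
      nlinarith [sq_nonneg (2-d)]
    nlinarith [mul_nonneg hx0 h, hxs]
  have hB2 : d*d*d*(2-p)/4 + 2*p*p ≤ 2*(d*d) := by
    have hs0 : (0:ℝ) ≤ 2 - p := by linarith
    have hs1 : 2 - p ≤ 1 := by linarith
    have hsx : (2-p)/2 ≤ 2 - d := by linarith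
    nlinarith [mul_nonneg (sub_nonneg.2 hxs) hs0, mul_nonneg (sub_nonneg.2 hxs) hx0,
      mul_nonneg (sub_nonneg.2 hxs) (sub_nonneg.2 hs1), mul_nonneg (sub_nonneg.2 hsx) hs0,
      mul_nonneg (sub_nonneg.2 hsx) hx0, sq_nonneg (2-d), sq_nonneg (2-p),
      mul_nonneg (mul_nonneg hs0 hs0) hx0, mul_nonneg (mul_nonneg hx0 hx0) hs0,
      mul_nonneg (mul_nonneg hx0 hx0) hx0, mul_nonneg (sub_nonneg.2 hxs) (mul_nonneg hs0 hs0),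
      mul_nonneg (sub_nonneg.2 hxs) (mul_nonneg hx0 hs0),
      mul_nonneg (sub_nonneg.2 hxs) (mul_nonneg hx0 hx0)]
  nlinarith [mul_nonneg (by linarith : (0:ℝ) ≤ 1-r) (sub_nonneg.2 hB1),
    mul_nonneg (by linarith : (0:ℝ) ≤ 2*r-1) (sub_nonneg.2 hB2)]

lemma key_scalar {p r : ℝ} (hp1 : 1 ≤ p) (hp2 : p ≤ 2) (hr0 : 0 ≤ r) (hr1 : r ≤ 1) :
    2^(p-1) * (1-r)^(p/2) + p * r^(p-1) ≤ 2 := by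
  have hc0 : (0:ℝ) < 2^(p-1) := Real.rpow_pos_of_pos two_pos _
  have hcp : (2:ℝ)^(p-1) ≤ p := by
    have := bern2 (q := p-1) (by linarith) (by linarith); linarith
  have hc3 : 2 ≤ (2:ℝ)^(p-1) * (3-p) := by
    have e : (2:ℝ)^(p-1) * 2^(2-p) = 2 := by
      rw [← Real.rpow_add two_pos]; norm_num
    have hbp : (2:ℝ)^(2-p) ≤ 3-p := by
      have := bern2 (q := 2-p) (by linarith) (by linarith); linarith
    calc (2:ℝ) = 2^(p-1) * 2^(2-p) := e.symm
      _ ≤ 2^(p-1) * (3-p) := mul_le_mul_of_nonneg_left hbp hc0.le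
  have u1 : (2:ℝ)^(p-1) * (1/2)^(p-1) = 1 := by
    rw [← Real.mul_rpow (by norm_num) (by norm_num)]; norm_num
  have u2 : (2:ℝ)^(p-1) * (1/2)^(p-2) = 2 := by
    have e : ((1:ℝ)/2)^(p-2) = (1/2)^(p-1) * (1/2)^(-1:ℝ) := by
      rw [← Real.rpow_add (by norm_num : (0:ℝ) < 1/2)]; ring_nf
    rw [e, Real.rpow_neg_one]
    calc (2:ℝ)^(p-1) * ((1/2)^(p-1) * (1/2)⁻¹) = ((2:ℝ)^(p-1) * (1/2)^(p-1)) * 2 := by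
          norm_num; ring
      _ = 2 := by rw [u1]; norm_num
  have tr : (2:ℝ)^(p-1) * r^(p-1) ≤ 2 - p + 2*(p-1)*r := by
    have t := tangent_le (x := r) (y := 1/2) (q := p-1) hr0 (by norm_num)
      (by linarith) (by linarith)
    rw [show p - 1 - 1 = p - 2 by ring] at t
    have t2 := mul_le_mul_of_nonneg_left t hc0.le
    have e2 : (2:ℝ)^(p-1) * ((1/2)^(p-1) + (p-1) * (1/2)^(p-2) * (r - 1/2))
        = 2 - p + 2*(p-1)*r := by
      linear_combination u1 + ((p-1)*(r-1/2)) * u2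
    linarith [t2, e2.le]
  have hX0 : (0:ℝ) ≤ (1-r)^(p/2) := Real.rpow_nonneg (by linarith) _
  have hY0 : (0:ℝ) ≤ r^(p-1) := Real.rpow_nonneg hr0 _
  rcases le_or_gt r (1/2) with hrh | hrh
  · -- r ≤ 1/2
    have tm : (1-r)^(p/2) ≤ 1 - p/2*r := by
      have h := rpow_one_add_le_one_add_mul_self (s := -r) (by linarith)
        (by linarith : (0:ℝ) ≤ p/2) (by linarith : p/2 ≤ 1)
      rw [show (1:ℝ) + -r = 1 - r by ring] at h
      linarith
    suffices h : (2:ℝ)^(p-1) * (2^(p-1) * (1-r)^(p/2) + p * r^(p-1)) ≤ 2^(p-1) * 2 by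
      exact le_of_mul_le_mul_left h hc0
    have b1 : (2:ℝ)^(p-1)*(2^(p-1))*((1-r)^(p/2)) ≤ (2:ℝ)^(p-1)*(2^(p-1))*(1 - p/2*r) :=
      mul_le_mul_of_nonneg_left tm (by positivity)
    have b2 : p*((2:ℝ)^(p-1) * r^(p-1)) ≤ p*(2-p+2*(p-1)*r) :=
      mul_le_mul_of_nonneg_left tr (by linarith)
    have hA := key_A hp1 hp2 hr0 hrh hc0 hcp hc3
    nlinarith [b1, b2, hA]
  · -- r > 1/2
    have hd0 : (0:ℝ) < 2^(p/2) := Real.rpow_pos_of_pos two_pos _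
    have hdc : (2:ℝ)^(p/2) * (2:ℝ)^(p/2) = 2 * (2:ℝ)^(p-1) := by
      have e1 : (2:ℝ)^(p/2) * 2^(p/2) = (2:ℝ)^(p/2+p/2) := (Real.rpow_add (by norm_num) _ _).symm
      have e2 : 2 * (2:ℝ)^(p-1) = (2:ℝ)^(1+(p-1)) := by
        rw [Real.rpow_add (by norm_num), Real.rpow_one]
      rw [e1, e2, show p/2 + p/2 = p by ring, show 1 + (p-1) = p by ring]
    have hdu : 2*(2:ℝ)^(p/2) ≤ 2 + p := by
      have := bern2 (q := p/2) (by linarith) (by linarith)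
      linarith
    have hdl : 2 - 0.6931471808*(2-p) ≤ (2:ℝ)^(p/2) := by
      have e1 : (2:ℝ)^(p/2) = Real.exp (Real.log 2 * (p/2)) := by
        rw [Real.rpow_def_of_pos two_pos]
      have e2 : Real.exp (Real.log 2 * (p/2))
          = 2 * Real.exp (Real.log 2 * ((p-2)/2)) := by
        rw [show Real.log 2 * (p/2) = Real.log 2 + Real.log 2 * ((p-2)/2) by ring,
          Real.exp_add, Real.exp_log two_pos]
      have e3 : Real.log 2 * ((p-2)/2) + 1 ≤ Real.exp (Real.log 2 * ((p-2)/2)) :=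
        Real.add_one_le_exp _
      have e4 : (0.6931471808 : ℝ) * ((p-2)/2) ≤ Real.log 2 * ((p-2)/2) :=
        mul_le_mul_of_nonpos_right Real.log_two_lt_d9.le (by linarith)
      calc 2 - 0.6931471808*(2-p) = 2 * ((0.6931471808:ℝ) * ((p-2)/2) + 1) := by ring
        _ ≤ 2 * (Real.log 2 * ((p-2)/2) + 1) := by linarith
        _ ≤ 2 * Real.exp (Real.log 2 * ((p-2)/2)) := by linarith [e3]
        _ = (2:ℝ)^(p/2) := by rw [e1, e2]
    have v1 : (2:ℝ)^(p/2) * (1/2)^(p/2) = 1 := by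
      rw [← Real.mul_rpow (by norm_num) (by norm_num)]; norm_num
    have v2 : (2:ℝ)^(p/2) * (1/2)^(p/2-1) = 2 := by
      have e : ((1:ℝ)/2)^(p/2-1) = (1/2)^(p/2) * (1/2)^(-1:ℝ) := by
        rw [← Real.rpow_add (by norm_num : (0:ℝ) < 1/2)]; ring_nf
      rw [e, Real.rpow_neg_one]
      calc (2:ℝ)^(p/2) * ((1/2)^(p/2) * (1/2)⁻¹) = ((2:ℝ)^(p/2) * (1/2)^(p/2)) * 2 := by
            norm_num; ring
        _ = 2 := by rw [v1]; norm_num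
    have tm2 : (2:ℝ)^(p/2) * (1-r)^(p/2) ≤ 1 + p*(1/2 - r) := by
      have t := tangent_le (x := 1-r) (y := 1/2) (q := p/2) (by linarith) (by norm_num)
        (by linarith) (by linarith)
      have t2 := mul_le_mul_of_nonneg_left t hd0.le
      have e2 : (2:ℝ)^(p/2) * ((1/2)^(p/2) + (p/2) * (1/2)^(p/2-1) * ((1-r) - 1/2))
          = 1 + p*(1/2 - r) := by
        linear_combination v1 + ((p/2)*((1-r)-1/2)) * v2
      linarith [t2, e2.le]
    -- abstract atoms
    obtain ⟨c, hc⟩ : ∃ x, (2:ℝ)^(p-1) = x := ⟨_, rfl⟩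
    obtain ⟨dd, hdq⟩ : ∃ x, (2:ℝ)^(p/2) = x := ⟨_, rfl⟩
    obtain ⟨X, hX⟩ : ∃ x, ((1:ℝ)-r)^(p/2) = x := ⟨_, rfl⟩
    obtain ⟨Y, hY⟩ : ∃ x, r^(p-1) = x := ⟨_, rfl⟩
    rw [hc, hX, hY]
    rw [hc] at hc0 hcp hc3 hdc
    rw [hdq] at hd0 hdc hdu hdl tm2
    rw [hX] at hX0 tm2
    rw [hY] at hY0 tr
    rw [hc] at tr
    have hdd0 : (0:ℝ) < dd*dd := by positivity
    suffices h : (dd*dd) * (c * X + p * Y) ≤ (dd*dd) * 2 by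
      exact le_of_mul_le_mul_left h hdd0
    have hc' : c = dd*dd/2 := by linarith
    have b1 : c*dd*(dd * X) ≤ c*dd*(1 + p*(1/2-r)) :=
      mul_le_mul_of_nonneg_left tm2 (by positivity)
    have b2 : (2*p)*(c * Y) ≤ (2*p)*(2-p+2*(p-1)*r) :=
      mul_le_mul_of_nonneg_left tr (by linarith)
    have hB := key_B hp1 hp2 hrh.le hr1 hd0 hdu hdl
    calc (dd*dd) * (c * X + p * Y)
        = c*dd*(dd*X) + p*((dd*dd)*Y) := by ring
      _ = c*dd*(dd*X) + (2*p)*(c*Y) := by rw [hdc]; ring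
      _ ≤ c*dd*(1 + p*(1/2-r)) + (2*p)*(2-p+2*(p-1)*r) := by linarith [b1, b2]
      _ = (dd*dd*dd/2)*(1 + p*(1/2-r)) + (2*p)*(2-p+2*(p-1)*r) := by rw [hc']; ring
      _ ≤ (dd*dd) * 2 := key_B hp1 hp2 hrh.le hr1 hd0 hdu hdl

lemma sq_rpow {x : ℝ} (hx : 0 ≤ x) (p : ℝ) : (x^2) ^ (p/2) = x ^ p := by
  rw [← Real.rpow_natCast x 2, ← Real.rpow_mul hx]
  congr 1
  push_cast
  ring

lemma sq_rpow' {x : ℝ} (hx : 0 ≤ x) (p : ℝ) : (x^2) ^ (p/2-1) = x ^ (p-2) := by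
  rw [← Real.rpow_natCast x 2, ← Real.rpow_mul hx]
  congr 1
  push_cast
  ring

lemma half_rpow (q : ℝ) : ((1:ℝ)/2) ^ q = 2 ^ (-q) := by
  rw [show ((1:ℝ)/2) = 2^(-1:ℝ) by norm_num [Real.rpow_neg_one],
    ← Real.rpow_mul (by norm_num : (0:ℝ) ≤ 2), show (-1)*q = -q by ring]

theorem holder_smoothness_of_norm_pow {d : ℕ} (p : ℝ) (hp1 : 1 < p) (hp2 : p ≤ 2)
    (v w : EuclideanSpace ℝ (Fin d)) (hv : v ≠ 0) :
    ‖v + w‖ ^ p ≤ ‖v‖ ^ p + p * ⟪v, w⟫ / ‖v‖ ^ (2 - p) + 2 ^ (2 - p) * ‖w‖ ^ p := by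
  obtain ⟨a, haa⟩ : ∃ x, ‖v‖ = x := ⟨_, rfl⟩
  obtain ⟨b, hbb⟩ : ∃ x, ‖w‖ = x := ⟨_, rfl⟩
  obtain ⟨n, hnn⟩ : ∃ x, ‖v + w‖ = x := ⟨_, rfl⟩
  obtain ⟨s, hss⟩ : ∃ x, ⟪v, w⟫ = x := ⟨_, rfl⟩
  have ha : 0 < a := haa ▸ norm_pos_iff.mpr hv
  have hb0 : 0 ≤ b := hbb ▸ norm_nonneg w
  have hn0 : 0 ≤ n := hnn ▸ norm_nonneg _
  have habs : |s| ≤ a * b := by rw [← haa, ← hbb, ← hss]; exact abs_real_inner_le_norm v w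
  have hsq : n^2 = a^2 + 2*s + b^2 := by
    rw [← haa, ← hbb, ← hnn, ← hss]; exact norm_add_sq_real v w
  rw [haa, hbb, hnn, hss]
  have hs1 : -(a*b) ≤ s := (abs_le.mp habs).1
  have hs2 : s ≤ a*b := (abs_le.mp habs).2
  have hmid : p * s / a^(2-p) = p * s * a^(p-2) := by
    rw [div_eq_mul_inv, ← Real.rpow_neg ha.le, show -(2-p) = p-2 by ring]
  rw [hmid]
  have hnp : n^p = (n^2)^(p/2) := (sq_rpow hn0 p).symm
  rcases le_or_gt b (2*a) with hba | hba
  · -- case b ≤ 2a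
    have t := tangent_le (x := n^2) (y := a^2) (q := p/2) (by positivity) (by positivity)
      (by linarith) (by linarith)
    have key1 : n^p ≤ a^p + (p/2)*a^(p-2)*(2*s+b^2) := by
      calc n^p = (n^2)^(p/2) := hnp
        _ ≤ (a^2)^(p/2) + (p/2)*(a^2)^(p/2-1)*(n^2 - a^2) := t
        _ = a^p + (p/2)*a^(p-2)*(2*s+b^2) := by
            rw [sq_rpow ha.le p, sq_rpow' ha.le p,
              show n^2 - a^2 = 2*s+b^2 from by linarith]
    have rest : (p/2)*a^(p-2)*b^2 ≤ 2^(2-p)*b^p := by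
      rcases eq_or_lt_of_le hb0 with hbz | hbz
      · rw [← hbz]
        norm_num
        rw [Real.zero_rpow (by linarith : p ≠ 0)]
        norm_num
      · have h1 : a^(p-2) ≤ (b/2)^(p-2) :=
          Real.rpow_le_rpow_of_nonpos (by positivity) (by linarith) (by linarith)
        have h2 : ((b/2):ℝ)^(p-2) = b^(p-2) * (1/2)^(p-2) := by
          rw [show b/2 = b*(1/2) by ring,
            Real.mul_rpow hb0 (by norm_num : (0:ℝ) ≤ 1/2)]
        have h3 : ((1:ℝ)/2)^(p-2) = 2^(2-p) := by
          rw [half_rpow, show -(p-2) = 2-p by ring]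
        have h4 : b^(p-2) * b^2 = b^p := by
          rw [show (b:ℝ)^2 = b^(2:ℝ) from by
                rw [show (2:ℝ) = ((2:ℕ):ℝ) by norm_num, Real.rpow_natCast],
            ← Real.rpow_add hbz, show p-2+2 = p by ring]
        have hbp0 : (0:ℝ) ≤ b^p := Real.rpow_nonneg hb0 _
        have h22 : (0:ℝ) ≤ 2^(2-p) := Real.rpow_nonneg (by norm_num) _
        calc (p/2)*a^(p-2)*b^2 ≤ (p/2)*((b/2)^(p-2))*b^2 := by
              apply mul_le_mul_of_nonneg_right _ (by positivity)
              exact mul_le_mul_of_nonneg_left h1 (by linarith)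
          _ = (p/2)*(2^(2-p)*b^p) := by rw [h2, h3, ← h4]; ring
          _ ≤ 1*(2^(2-p)*b^p) := by
              apply mul_le_mul_of_nonneg_right (by linarith) (by positivity)
          _ = 2^(2-p)*b^p := by ring
    have expand : (p/2)*a^(p-2)*(2*s+b^2) = p*s*a^(p-2) + (p/2)*a^(p-2)*b^2 := by ring
    linarith [key1, rest]
  · -- case 2a < b
    have hb : 0 < b := by linarith
    have hba' : a ≤ b - a := by linarith
    have hba0 : (0:ℝ) ≤ b - a := by linarith
    have hnb : b - a ≤ n := by
      have h := norm_sub_norm_le w (-v)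
      rw [sub_neg_eq_add, norm_neg, add_comm w v] at h
      rw [haa, hbb, hnn] at h
      linarith
    have hy : (0:ℝ) < (b-a)^2 := pow_pos (by linarith) 2
    have t := tangent_le (x := n^2) (y := (b-a)^2) (q := p/2) (by positivity) hy
      (by linarith) (by linarith)
    have hmono : ((b-a)^2)^(p/2-1) ≤ a^(p-2) := by
      rw [sq_rpow' hba0 p]
      exact Real.rpow_le_rpow_of_nonpos ha hba' (by linarith)
    have hgap : 0 ≤ n^2 - (b-a)^2 := by nlinarith [hnb, hn0, hba0]
    have hgap_eq : n^2 - (b-a)^2 = 2*s + 2*a*b := by rw [hsq]; ring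
    have hap1 : a^(p-2) * a = a^(p-1) := by
      nth_rewrite 2 [show a = a^(1:ℝ) from (Real.rpow_one a).symm]
      rw [← Real.rpow_add ha, show p-2+1 = p-1 by ring]
    have key1 : n^p ≤ (b-a)^p + p*s*a^(p-2) + p*a^(p-1)*b := by
      have step2 : (p/2)*(((b-a)^2)^(p/2-1))*(n^2-(b-a)^2)
          ≤ (p/2)*a^(p-2)*(n^2-(b-a)^2) := by
        apply mul_le_mul_of_nonneg_right _ hgap
        exact mul_le_mul_of_nonneg_left hmono (by linarith)
      have e : (p/2)*a^(p-2)*(n^2-(b-a)^2) = p*s*a^(p-2) + p*a^(p-1)*b := by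
        rw [hgap_eq, ← hap1]; ring
      calc n^p = (n^2)^(p/2) := hnp
        _ ≤ ((b-a)^2)^(p/2) + (p/2)*(((b-a)^2)^(p/2-1))*(n^2 - (b-a)^2) := t
        _ ≤ ((b-a)^2)^(p/2) + (p/2)*a^(p-2)*(n^2-(b-a)^2) := by linarith [step2]
        _ = (b-a)^p + (p*s*a^(p-2) + p*a^(p-1)*b) := by rw [sq_rpow hba0 p, e]
        _ = (b-a)^p + p*s*a^(p-2) + p*a^(p-1)*b := by ring
    have step3 : (b-a)^p ≤ ((b-2*a)*b)^(p/2) + a^p := by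
      have hnn2 : (0:ℝ) ≤ (b-2*a)*b := mul_nonneg (by linarith) hb0
      have e2 : (b-a)^2 = (b-2*a)*b + a^2 := by ring
      calc (b-a)^p = ((b-a)^2)^(p/2) := (sq_rpow hba0 p).symm
        _ = ((b-2*a)*b + a^2)^(p/2) := by rw [e2]
        _ ≤ ((b-2*a)*b)^(p/2) + (a^2)^(p/2) :=
            rpow_subadd hnn2 (by positivity) (by linarith) (by linarith)
        _ = ((b-2*a)*b)^(p/2) + a^p := by rw [sq_rpow ha.le p]
    have step4 : ((b-2*a)*b)^(p/2) + p*a^(p-1)*b ≤ 2^(2-p)*b^p := by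
      obtain ⟨r, hrd⟩ : ∃ x, 2*a/b = x := ⟨_, rfl⟩
      have hr0 : 0 ≤ r := by rw [← hrd]; positivity
      have hr1 : r ≤ 1 := by rw [← hrd]; rw [div_le_one hb]; linarith
      have har : a = r*b/2 := by rw [← hrd]; field_simp
      have e1 : (b-2*a)*b = (1-r)*b^2 := by rw [har]; field_simp
      have eA : ((b-2*a)*b)^(p/2) = (1-r)^(p/2) * b^p := by
        rw [e1, Real.mul_rpow (by linarith) (by positivity), sq_rpow hb0 p]
      have e4 : b^(p-1) * b = b^p := by
        nth_rewrite 2 [show b = b^(1:ℝ) from (Real.rpow_one b).symm]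
        rw [← Real.rpow_add hb, show p-1+1 = p by ring]
      have eB : a^(p-1) * b = r^(p-1) * 2^(1-p) * b^p := by
        have : a^(p-1) = r^(p-1) * (1/2)^(p-1) * b^(p-1) := by
          rw [har, show r*b/2 = r*(b*(1/2)) by ring,
            Real.mul_rpow hr0 (by positivity),
            Real.mul_rpow hb0 (by norm_num : (0:ℝ) ≤ 1/2)]
          ring
        rw [this, half_rpow, show -(p-1) = 1-p by ring, ← e4]
        ring
      have hq1 : (2:ℝ)^(1-p) * 2^(p-1) = 1 := by
        rw [← Real.rpow_add (by norm_num : (0:ℝ) < 2), show 1-p+(p-1) = 0 by ring,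
          Real.rpow_zero]
      have hq2 : 2 * (2:ℝ)^(1-p) = 2^(2-p) := by
        nth_rewrite 1 [show (2:ℝ) = 2^(1:ℝ) from (Real.rpow_one 2).symm]
        rw [← Real.rpow_add (by norm_num : (0:ℝ) < 2), show 1+(1-p) = 2-p by ring]
      have k0 : (0:ℝ) ≤ 2^(1-p)*b^p := by positivity
      have mk := mul_le_mul_of_nonneg_left (key_scalar hp1.le hp2 hr0 hr1) k0
      have expand : (2:ℝ)^(1-p)*b^p * (2^(p-1)*(1-r)^(p/2) + p*r^(p-1))
          = (2^(1-p)*2^(p-1))*((1-r)^(p/2)*b^p) + p*(r^(p-1)*2^(1-p)*b^p) := by ring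
      have expand2 : (2:ℝ)^(1-p)*b^p*2 = (2*2^(1-p))*b^p := by ring
      rw [expand, expand2, hq1, hq2, one_mul] at mk
      rw [eA, show p*a^(p-1)*b = p*(a^(p-1)*b) by ring, eB]
      linarith [mk]
    have hap0 : (0:ℝ) ≤ a^p := Real.rpow_nonneg ha.le _
    linarith [key1, step3, step4]
end

section
/- Let μ > 0, p ∈ (1,2), G > 0, and let (R_t)_{t≥1}, (D_t)_{t≥1} be nonnegative sequences satisfying, with step sizes η_t = 2/(μ t), the recursion R_{t+1} ≤ ((t−1)/t)·R_t − η_t·(μ/2)^((2−p)/2)·D_t + 4 G^p/(μ^p t^p) for all t ≥ 1. Then for every T ≥ 1: (1/T)∑_{t=1}^T D_t + (μ/2)^(p/2)·R_{T+1} ≤ 8 G^p (μ/2)^(p/2) / ((2−p) μ^p T^(p−1)). -/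
/-!
Multiplying the recursion by `t · (μ/2)^(p/2)` and using `(μ/2)^(p/2) · (μ/2)^((2-p)/2) = μ/2`
turns it into `t u_{t+1} ≤ (t - 1) u_t - D_t + K t^(1-p)` for `u = (μ/2)^(p/2) R`, which
telescopes. Concavity of `x ↦ x^(2-p)` bounds `∑_{t ≤ T} t^(1-p)` by `T^(2-p)/(2-p)`.
-/

open Finset

lemma Real.mul_rpow_sub_one_le_rpow_sub_rpow {q x : ℝ} (hq0 : 0 ≤ q) (hq1 : q ≤ 1) (hx : 1 ≤ x) :
    q * x ^ (q - 1) ≤ x ^ q - (x - 1) ^ q := by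
  have hx0 : 0 < x := by linarith
  have hinv : -1 ≤ -x⁻¹ := neg_le_neg (inv_le_one_of_one_le₀ hx)
  have hfactor : (x - 1) ^ q = x ^ q * (1 + -x⁻¹) ^ q := by
    rw [← Real.mul_rpow hx0.le (by linarith), mul_add, mul_neg, mul_inv_cancel₀ hx0.ne', mul_one,
      sub_eq_add_neg]
  have hbern := rpow_one_add_le_one_add_mul_self hinv hq0 hq1
  calc q * x ^ (q - 1) = x ^ q - x ^ q * (1 + q * -x⁻¹) := by
        rw [Real.rpow_sub_one hx0.ne']; ring
    _ ≤ x ^ q - (x - 1) ^ q := by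
        rw [hfactor]; gcongr

lemma sum_Icc_rpow_sub_one_le {q : ℝ} (hq0 : 0 < q) (hq1 : q ≤ 1) (T : ℕ) :
    ∑ t ∈ Icc 1 T, (t : ℝ) ^ (q - 1) ≤ (T : ℝ) ^ q / q := by
  induction T with
  | zero => simp [Real.zero_rpow hq0.ne']
  | succ T ih =>
    rw [sum_Icc_succ_top (by omega), le_div_iff₀ hq0]
    have hstep := Real.mul_rpow_sub_one_le_rpow_sub_rpow hq0.le hq1
      (x := ((T + 1 : ℕ) : ℝ)) (by simp)
    rw [le_div_iff₀ hq0] at ih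
    push_cast at hstep ⊢
    rw [add_sub_cancel_right] at hstep
    linarith

lemma add_sum_le_sum_of_mul_succ_le {u d e : ℕ → ℝ}
    (h : ∀ t : ℕ, 1 ≤ t → (t : ℝ) * u (t + 1) ≤ ((t : ℝ) - 1) * u t - d t + e t) (T : ℕ) :
    (T : ℝ) * u (T + 1) + ∑ t ∈ Icc 1 T, d t ≤ ∑ t ∈ Icc 1 T, e t := by
  induction T with
  | zero => simp
  | succ T ih =>
    rw [sum_Icc_succ_top (by omega), sum_Icc_succ_top (by omega)]
    have := h (T + 1) (by omega)
    push_cast at this ⊢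
    linarith

lemma mul_rpow_recursion_step {μ p G r r' d t : ℝ} (hμ : 0 < μ) (ht : 0 < t)
    (h : r' ≤ ((t - 1) / t) * r - (2 / (μ * t)) * (μ / 2) ^ ((2 - p) / 2) * d
      + 4 * G ^ p / (μ ^ p * t ^ p)) :
    t * ((μ / 2) ^ (p / 2) * r') ≤ (t - 1) * ((μ / 2) ^ (p / 2) * r) - d
      + 4 * (μ / 2) ^ (p / 2) * G ^ p / μ ^ p * t ^ (1 - p) := by
  have hac : (μ / 2) ^ (p / 2) * (μ / 2) ^ ((2 - p) / 2) = μ / 2 := by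
    rw [← Real.rpow_add (by positivity), show p / 2 + (2 - p) / 2 = 1 by ring, Real.rpow_one]
  calc t * ((μ / 2) ^ (p / 2) * r') = (μ / 2) ^ (p / 2) * t * r' := by ring
    _ ≤ _ := mul_le_mul_of_nonneg_left h (by positivity)
    _ = _ := by
      rw [Real.rpow_sub ht, Real.rpow_one]
      field_simp
      linear_combination (-2 * d * t ^ p * μ ^ p) * hac

theorem strongly_convex_sgd_recursion_general (μ p G : ℝ) (hμ : 0 < μ) (hp1 : 1 < p) (hp2 : p < 2)
    (hG : 0 < G) (R D : ℕ → ℝ)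
    (hrec : ∀ t : ℕ, 1 ≤ t →
      R (t + 1) ≤ (((t : ℝ) - 1) / t) * R t
        - (2 / (μ * t)) * (μ / 2) ^ ((2 - p) / 2) * D t
        + 4 * G ^ p / (μ ^ p * (t : ℝ) ^ p))
    (T : ℕ) (hT : 1 ≤ T) :
    (1 / (T : ℝ)) * ∑ t ∈ Finset.Icc 1 T, D t + (μ / 2) ^ (p / 2) * R (T + 1)
      ≤ 8 * G ^ p * (μ / 2) ^ (p / 2) / ((2 - p) * μ ^ p * (T : ℝ) ^ (p - 1)) := by
  set a := (μ / 2) ^ (p / 2)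
  have hq : 0 < 2 - p := by linarith
  have hT0 : (0 : ℝ) < T := by exact_mod_cast hT
  have htel := add_sum_le_sum_of_mul_succ_le (u := fun t ↦ a * R t)
    (e := fun t : ℕ ↦ 4 * a * G ^ p / μ ^ p * (t : ℝ) ^ (1 - p))
    (fun t ht ↦ mul_rpow_recursion_step hμ (by exact_mod_cast ht) (hrec t ht)) T
  have hsum := sum_Icc_rpow_sub_one_le hq (by linarith) T
  rw [show 2 - p - 1 = 1 - p by ring] at hsum
  have hT_rpow : (T : ℝ) ^ (2 - p) = T / T ^ (p - 1) := by
    rw [← Real.rpow_one_sub' hT0.le (by linarith), sub_sub_eq_add_sub, one_add_one_eq_two]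
  calc (1 / (T : ℝ)) * ∑ t ∈ Icc 1 T, D t + a * R (T + 1)
      = ((T : ℝ) * (a * R (T + 1)) + ∑ t ∈ Icc 1 T, D t) / T := by field_simp; ring
    _ ≤ 4 * a * G ^ p / μ ^ p * ((T : ℝ) ^ (2 - p) / (2 - p)) / T := by
        gcongr
        rw [← mul_sum] at htel
        exact htel.trans (mul_le_mul_of_nonneg_left hsum (by positivity))
    _ = 4 * G ^ p * a / ((2 - p) * μ ^ p * (T : ℝ) ^ (p - 1)) := by
        rw [hT_rpow]
        field_simp
    _ ≤ 8 * G ^ p * a / ((2 - p) * μ ^ p * (T : ℝ) ^ (p - 1)) := by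
        gcongr
        norm_num

theorem strongly_convex_sgd_recursion (μ p G : ℝ) (hμ : 0 < μ) (hp1 : 1 < p) (hp2 : p < 2)
    (hG : 0 < G) (R D : ℕ → ℝ) (hR : ∀ t, 0 ≤ R t) (hD : ∀ t, 0 ≤ D t)
    (hrec : ∀ t : ℕ, 1 ≤ t →
      R (t + 1) ≤ (((t : ℝ) - 1) / t) * R t
        - (2 / (μ * t)) * (μ / 2) ^ ((2 - p) / 2) * D t
        + 4 * G ^ p / (μ ^ p * (t : ℝ) ^ p))
    (T : ℕ) (hT : 1 ≤ T) :
    (1 / (T : ℝ)) * ∑ t ∈ Finset.Icc 1 T, D t + (μ / 2) ^ (p / 2) * R (T + 1)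
      ≤ 8 * G ^ p * (μ / 2) ^ (p / 2) / ((2 - p) * μ ^ p * (T : ℝ) ^ (p - 1)) :=
  strongly_convex_sgd_recursion_general μ p G hμ hp1 hp2 hG R D hrec T hT
end

section
/- Let p ∈ [1,2] and X₁, …, X_n be ℝ^d-valued random vectors forming a martingale difference sequence (E[X_j | X_1,…,X_{j−1}] = 0 a.s.) with E[‖X_j‖^p] < ∞ for each j. Then E[‖∑_{j=1}^n X_j‖^p] ≤ 2·∑_{j=1}^n E[‖X_j‖^p]. -/
/-!
For `1 ≤ p ≤ 2` the function `‖·‖ ^ p` on a real inner product space satisfies the one-step bound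
`‖x + y‖ ^ p ≤ ‖x‖ ^ p + p ⟪‖x‖ ^ (p - 2) • x, y⟫ + 2 ‖y‖ ^ p`: write
`‖x + y‖ ^ p = (‖x‖ ^ 2 + 2 ⟪x, y⟫ + ‖y‖ ^ 2) ^ (p / 2)` and bound the concave function
`u ↦ u ^ (p / 2)` by its tangent at the larger of `‖x‖ ^ 2` and `‖y‖ ^ 2`.
Apply it with `x` the partial sum `X₁ + ⋯ + Xₖ₋₁` and `y = Xₖ`: the middle term is the inner product
of `Xₖ` with a function of the past, so it has expectation zero for a martingale difference
sequence, and induction on `k` gives the bound.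
-/

open MeasureTheory Real
open scoped InnerProductSpace

lemma rpow_le_rpow_add_mul_sub {u v θ : ℝ} (hu : 0 ≤ u) (hv : 0 < v) (hθ0 : 0 ≤ θ) (hθ1 : θ ≤ 1) :
    u ^ θ ≤ v ^ θ + θ * v ^ (θ - 1) * (u - v) := by
  have bernoulli : (u / v) ^ θ ≤ 1 + θ * (u / v - 1) := by
    simpa using rpow_one_add_le_one_add_mul_self (s := u / v - 1)
      (by linarith [div_nonneg hu hv.le]) hθ0 hθ1
  have hvθ : v ^ θ = v ^ (θ - 1) * v := by rw [← rpow_add_one hv.ne', sub_add_cancel]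
  rw [div_rpow hu hv.le, div_le_iff₀ (rpow_pos_of_pos hv θ)] at bernoulli
  calc u ^ θ ≤ (1 + θ * (u / v - 1)) * v ^ θ := bernoulli
    _ = v ^ θ + θ * v ^ (θ - 1) * (u - v) := by
      rw [hvθ]; field_simp

lemma sq_rpow_div_two {c : ℝ} (hc : 0 ≤ c) (q : ℝ) : (c ^ 2) ^ (q / 2) = c ^ q := by
  rw [← rpow_natCast, ← rpow_mul hc]
  norm_num [mul_div_cancel₀]

lemma rpow_div_two_le_rpow_add_mul_sub_sq {p s c : ℝ} (hp0 : 0 ≤ p) (hp2 : p ≤ 2) (hs : 0 ≤ s)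
    (hc : 0 < c) :
    s ^ (p / 2) ≤ c ^ p + p / 2 * c ^ (p - 2) * (s - c ^ 2) := by
  have h := rpow_le_rpow_add_mul_sub hs (pow_pos hc 2) (θ := p / 2) (by positivity) (by linarith)
  rwa [sq_rpow_div_two hc.le, show p / 2 - 1 = (p - 2) / 2 by ring, sq_rpow_div_two hc.le] at h

lemma rpow_sub_two_mul_sq_le {p a b : ℝ} (hp2 : p ≤ 2) (hb : 0 ≤ b) (hba : b ≤ a) :
    a ^ (p - 2) * b ^ 2 ≤ b ^ p := by
  rcases hb.eq_or_lt with rfl | hb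
  · simpa using rpow_nonneg le_rfl p
  calc a ^ (p - 2) * b ^ 2 ≤ b ^ (p - 2) * b ^ 2 :=
        mul_le_mul_of_nonneg_right (rpow_le_rpow_of_nonpos hb hba (by linarith)) (sq_nonneg b)
    _ = b ^ p := by rw [← rpow_natCast, ← rpow_add hb]; norm_num

lemma mul_rpow_sub_one_sub_le {p a b : ℝ} (hp1 : 1 ≤ p) (hp2 : p ≤ 2) (ha : 0 ≤ a) (hab : a ≤ b)
    (hb : 0 < b) : p * (a ^ (p - 1) * b - a * b ^ (p - 1)) ≤ b ^ p := by
  have tangent := rpow_le_rpow_add_mul_sub ha hb (θ := p - 1) (by linarith) (by linarith)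
  have h1 : b ^ (p - 1) = b ^ (p - 1 - 1) * b := by rw [← rpow_add_one hb.ne', sub_add_cancel]
  have h2 : b ^ p = b ^ (p - 1) * b := by rw [← rpow_add_one hb.ne', sub_add_cancel]
  have hb1 : 0 ≤ b ^ (p - 1) := rpow_nonneg hb.le _
  have key : p * (a ^ (p - 1) * b - a * b ^ (p - 1)) ≤ p * (2 - p) * (b ^ (p - 1) * (b - a)) := by
    have := mul_le_mul_of_nonneg_left tangent (mul_nonneg (by linarith : (0:ℝ) ≤ p) hb.le)
    rw [h1] at this ⊢
    nlinarith
  have hc : p * (2 - p) ≤ 1 := by nlinarith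
  calc _ ≤ p * (2 - p) * (b ^ (p - 1) * (b - a)) := key
    _ ≤ 1 * (b ^ (p - 1) * b) :=
        mul_le_mul hc (by gcongr; linarith) (mul_nonneg hb1 (by linarith)) zero_le_one
    _ = b ^ p := by rw [h2, one_mul]

lemma rpow_sq_add_two_mul_add_sq_le_of_le {p a b t : ℝ} (hp0 : 0 ≤ p) (hp2 : p ≤ 2) (ha : 0 < a)
    (hb : 0 ≤ b) (hba : b ≤ a) (ht : -(a * b) ≤ t) :
    (a ^ 2 + 2 * t + b ^ 2) ^ (p / 2) ≤ a ^ p + p * a ^ (p - 2) * t + 2 * b ^ p := by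
  have hs : 0 ≤ a ^ 2 + 2 * t + b ^ 2 := by nlinarith
  have tangent := rpow_div_two_le_rpow_add_mul_sub_sq hp0 hp2 hs ha
  have hsq := rpow_sub_two_mul_sq_le hp2 hb hba
  have hbp : 0 ≤ b ^ p := rpow_nonneg hb p
  nlinarith

lemma rpow_sq_add_two_mul_add_sq_le_of_lt {p a b t : ℝ} (hp1 : 1 ≤ p) (hp2 : p ≤ 2) (ha : 0 < a)
    (hab : a < b) (ht : -(a * b) ≤ t) :
    (a ^ 2 + 2 * t + b ^ 2) ^ (p / 2) ≤ a ^ p + p * a ^ (p - 2) * t + 2 * b ^ p := by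
  have hb : 0 < b := ha.trans hab
  have hs : 0 ≤ a ^ 2 + 2 * t + b ^ 2 := by nlinarith
  have tangent := rpow_div_two_le_rpow_add_mul_sub_sq (by linarith) hp2 hs hb
  have hsq := rpow_sub_two_mul_sq_le hp2 ha.le hab.le
  have hmono : b ^ (p - 2) ≤ a ^ (p - 2) := rpow_le_rpow_of_nonpos ha hab.le (by linarith)
  have hcross : p * (b ^ (p - 2) - a ^ (p - 2)) * t ≤ p * (a ^ (p - 1) * b - a * b ^ (p - 1)) := by
    rw [show p - 1 = p - 2 + 1 by ring, rpow_add_one ha.ne', rpow_add_one hb.ne']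
    nlinarith [mul_nonneg (sub_nonneg.2 hmono) (by linarith : 0 ≤ t + a * b)]
  have hdiff := mul_rpow_sub_one_sub_le hp1 hp2 ha.le hab.le hb
  have hap : 0 ≤ a ^ p := rpow_nonneg ha.le p
  nlinarith

lemma rpow_sq_add_two_mul_add_sq_le {p a b t : ℝ} (hp1 : 1 ≤ p) (hp2 : p ≤ 2) (ha : 0 < a)
    (hb : 0 ≤ b) (ht : -(a * b) ≤ t) :
    (a ^ 2 + 2 * t + b ^ 2) ^ (p / 2) ≤ a ^ p + p * a ^ (p - 2) * t + 2 * b ^ p := by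
  rcases le_or_gt b a with hba | hab
  · exact rpow_sq_add_two_mul_add_sq_le_of_le (by linarith) hp2 ha hb hba ht
  · exact rpow_sq_add_two_mul_add_sq_le_of_lt hp1 hp2 ha hab ht

lemma rpow_sub_one_mul_le_rpow_add_rpow {p a b : ℝ} (hp1 : 1 ≤ p) (ha : 0 ≤ a) (hb : 0 ≤ b) :
    a ^ (p - 1) * b ≤ a ^ p + b ^ p := by
  have hmax : 0 ≤ max a b := le_max_of_le_left ha
  calc a ^ (p - 1) * b ≤ max a b ^ (p - 1) * max a b :=
        mul_le_mul (rpow_le_rpow ha (le_max_left a b) (by linarith)) (le_max_right a b) hb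
          (rpow_nonneg hmax _)
    _ = max a b ^ p := by rw [← rpow_add_one' hmax (by linarith), sub_add_cancel]
    _ ≤ a ^ p + b ^ p := by
      rcases max_choice a b with h | h <;> rw [h] <;> linarith [rpow_nonneg ha p, rpow_nonneg hb p]

lemma MeasureTheory.MemLp.integrable_norm_rpow_ofReal {Ω E : Type*} [NormedAddCommGroup E]
    {mΩ : MeasurableSpace Ω} {μ : Measure Ω} {p : ℝ} (hp : 0 < p) {f : Ω → E}
    (hf : MemLp f (ENNReal.ofReal p) μ) :
    Integrable (fun ω ↦ ‖f ω‖ ^ p) μ := by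
  simpa [ENNReal.toReal_ofReal hp.le] using
    hf.integrable_norm_rpow (by simpa using hp) ENNReal.ofReal_ne_top

section InnerProductSpace

variable {E : Type*} [NormedAddCommGroup E] [InnerProductSpace ℝ E]

lemma norm_add_rpow_le {p : ℝ} (hp1 : 1 ≤ p) (hp2 : p ≤ 2) (x y : E) :
    ‖x + y‖ ^ p ≤ ‖x‖ ^ p + p * ⟪‖x‖ ^ (p - 2) • x, y⟫_ℝ + 2 * ‖y‖ ^ p := by
  rcases eq_or_ne x 0 with rfl | hx
  · simp only [zero_add, norm_zero, zero_rpow (by linarith : p ≠ 0), smul_zero, inner_zero_left,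
      mul_zero]
    linarith [rpow_nonneg (norm_nonneg y) p]
  rw [real_inner_smul_left, ← mul_assoc]
  calc ‖x + y‖ ^ p = (‖x + y‖ ^ 2) ^ (p / 2) := (sq_rpow_div_two (norm_nonneg _) p).symm
    _ ≤ _ := by
      rw [norm_add_sq_real]
      exact rpow_sq_add_two_mul_add_sq_le hp1 hp2 (norm_pos_iff.2 hx) (norm_nonneg y)
        (neg_le_of_abs_le (abs_real_inner_le_norm x y))

lemma norm_rpow_sub_two_smul_le (p : ℝ) (x : E) : ‖‖x‖ ^ (p - 2) • x‖ ≤ ‖x‖ ^ (p - 1) := by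
  rcases eq_or_ne x 0 with rfl | hx
  · simpa using rpow_nonneg le_rfl _
  rw [norm_smul, norm_of_nonneg (rpow_nonneg (norm_nonneg x) _), show p - 1 = p - 2 + 1 by ring,
    rpow_add_one (norm_ne_zero_iff.2 hx)]

lemma abs_inner_rpow_sub_two_smul_le {p : ℝ} (hp1 : 1 ≤ p) (x y : E) :
    |⟪‖x‖ ^ (p - 2) • x, y⟫_ℝ| ≤ ‖x‖ ^ p + ‖y‖ ^ p :=
  calc |⟪‖x‖ ^ (p - 2) • x, y⟫_ℝ| ≤ ‖‖x‖ ^ (p - 2) • x‖ * ‖y‖ := abs_real_inner_le_norm _ _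
    _ ≤ ‖x‖ ^ (p - 1) * ‖y‖ := by gcongr; exact norm_rpow_sub_two_smul_le p x
    _ ≤ ‖x‖ ^ p + ‖y‖ ^ p := rpow_sub_one_mul_le_rpow_add_rpow hp1 (norm_nonneg x) (norm_nonneg y)

lemma integral_inner_eq_zero_of_condExp_eq_zero [CompleteSpace E] {Ω : Type*}
    {m mΩ : MeasurableSpace Ω} {μ : Measure Ω} (hm : m ≤ mΩ) [SigmaFinite (μ.trim hm)]
    {G X : Ω → E} (hG : StronglyMeasurable[m] G) (hGX : Integrable (fun ω ↦ ⟪G ω, X ω⟫_ℝ) μ)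
    (hX : Integrable X μ) (hcond : μ[X | m] =ᵐ[μ] 0) :
    ∫ ω, ⟪G ω, X ω⟫_ℝ ∂μ = 0 :=
  calc ∫ ω, ⟪G ω, X ω⟫_ℝ ∂μ = ∫ ω, (μ[fun ω ↦ ⟪G ω, X ω⟫_ℝ | m]) ω ∂μ := (integral_condExp hm).symm
    _ = ∫ ω, ⟪G ω, (μ[X | m]) ω⟫_ℝ ∂μ :=
      integral_congr_ae (condExp_bilin_of_stronglyMeasurable_left (innerSL ℝ) hG hGX hX)
    _ = 0 := by
      rw [integral_congr_ae (hcond.mono fun ω hω ↦ by rw [hω])]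
      simp

lemma integral_norm_add_rpow_le [CompleteSpace E] {Ω : Type*} {m mΩ : MeasurableSpace Ω}
    {μ : Measure Ω} [IsFiniteMeasure μ] (hm : m ≤ mΩ) {p : ℝ} (hp1 : 1 ≤ p) (hp2 : p ≤ 2)
    {S Y : Ω → E} (hS : StronglyMeasurable[m] S) (hSp : MemLp S (ENNReal.ofReal p) μ)
    (hYp : MemLp Y (ENNReal.ofReal p) μ) (hY : μ[Y | m] =ᵐ[μ] 0) :
    ∫ ω, ‖S ω + Y ω‖ ^ p ∂μ ≤ ∫ ω, ‖S ω‖ ^ p ∂μ + 2 * ∫ ω, ‖Y ω‖ ^ p ∂μ := by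
  have hp0 : 0 < p := by linarith
  set G : Ω → E := fun ω ↦ ‖S ω‖ ^ (p - 2) • S ω
  have hG : StronglyMeasurable[m] G :=
    (hS.norm.measurable.pow_const _).stronglyMeasurable.smul hS
  have hSint := hSp.integrable_norm_rpow_ofReal hp0
  have hYint := hYp.integrable_norm_rpow_ofReal hp0
  have hcross : Integrable (fun ω ↦ ⟪G ω, Y ω⟫_ℝ) μ :=
    (hSint.add hYint).mono' ((hG.mono hm).aestronglyMeasurable.inner hYp.1)
      (ae_of_all _ fun ω ↦ abs_inner_rpow_sub_two_smul_le hp1 (S ω) (Y ω))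
  have hcross_zero : ∫ ω, ⟪G ω, Y ω⟫_ℝ ∂μ = 0 :=
    integral_inner_eq_zero_of_condExp_eq_zero hm hG hcross
      (hYp.integrable (ENNReal.one_le_ofReal.2 hp1)) hY
  have hSG : Integrable (fun ω ↦ ‖S ω‖ ^ p + p * ⟪G ω, Y ω⟫_ℝ) μ :=
    hSint.add (hcross.const_mul p)
  calc ∫ ω, ‖S ω + Y ω‖ ^ p ∂μ
      ≤ ∫ ω, ‖S ω‖ ^ p + p * ⟪G ω, Y ω⟫_ℝ + 2 * ‖Y ω‖ ^ p ∂μ :=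
        integral_mono ((hSp.add hYp).integrable_norm_rpow_ofReal hp0)
          (hSG.add (hYint.const_mul 2)) fun ω ↦ norm_add_rpow_le hp1 hp2 (S ω) (Y ω)
    _ = ∫ ω, ‖S ω‖ ^ p ∂μ + 2 * ∫ ω, ‖Y ω‖ ^ p ∂μ := by
        rw [integral_add hSG (hYint.const_mul 2), integral_add hSint (hcross.const_mul p),
          integral_const_mul, integral_const_mul, hcross_zero, mul_zero, add_zero]

theorem integral_norm_sum_rpow_le [CompleteSpace E] [MeasurableSpace E] [BorelSpace E]
    [SecondCountableTopology E] {Ω : Type*} [mΩ : MeasurableSpace Ω] {μ : Measure Ω}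
    [IsFiniteMeasure μ] {p : ℝ} (hp1 : 1 ≤ p) (hp2 : p ≤ 2) (X : ℕ → Ω → E)
    (hmeas : ∀ j, Measurable (X j)) (n : ℕ)
    (hmem : ∀ j ∈ Finset.Icc 1 n, MemLp (X j) (ENNReal.ofReal p) μ)
    (hmds : ∀ j ∈ Finset.Icc 1 n,
      μ[X j | ⨆ i ∈ Finset.Ico 1 j, MeasurableSpace.comap (X i) inferInstance] =ᵐ[μ] 0) :
    ∫ ω, ‖∑ j ∈ Finset.Icc 1 n, X j ω‖ ^ p ∂μ
      ≤ 2 * ∑ j ∈ Finset.Icc 1 n, ∫ ω, ‖X j ω‖ ^ p ∂μ := by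
  induction n with
  | zero => simp [zero_rpow (by linarith : p ≠ 0)]
  | succ n ih =>
    have hIcc : Finset.Icc 1 n ⊆ Finset.Icc 1 (n + 1) := Finset.Icc_subset_Icc_right n.le_succ
    have hlast : n + 1 ∈ Finset.Icc 1 (n + 1) := by simp
    set ℱ := ⨆ i ∈ Finset.Ico 1 (n + 1), MeasurableSpace.comap (X i) inferInstance
    have hℱ : ℱ ≤ mΩ := iSup₂_le fun i _ ↦ (hmeas i).comap_le
    have hS : StronglyMeasurable[ℱ] fun ω ↦ ∑ j ∈ Finset.Icc 1 n, X j ω :=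
      Finset.stronglyMeasurable_fun_sum _ fun j hj ↦
        ((comap_measurable (X j)).mono (le_iSup₂_of_le j (by simpa [Nat.lt_succ_iff] using hj)
          le_rfl) le_rfl).stronglyMeasurable
    simp_rw [Finset.sum_Icc_succ_top (Nat.le_add_left 1 n)]
    calc ∫ ω, ‖∑ j ∈ Finset.Icc 1 n, X j ω + X (n + 1) ω‖ ^ p ∂μ
        ≤ ∫ ω, ‖∑ j ∈ Finset.Icc 1 n, X j ω‖ ^ p ∂μ + 2 * ∫ ω, ‖X (n + 1) ω‖ ^ p ∂μ :=
          integral_norm_add_rpow_le hℱ hp1 hp2 hS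
            (memLp_finsetSum _ fun j hj ↦ hmem j (hIcc hj)) (hmem _ hlast) (hmds _ hlast)
      _ ≤ 2 * ∑ j ∈ Finset.Icc 1 n, ∫ ω, ‖X j ω‖ ^ p ∂μ + 2 * ∫ ω, ‖X (n + 1) ω‖ ^ p ∂μ := by
          gcongr
          exact ih (fun j hj ↦ hmem j (hIcc hj)) (fun j hj ↦ hmds j (hIcc hj))
      _ = 2 * (∑ j ∈ Finset.Icc 1 n, ∫ ω, ‖X j ω‖ ^ p ∂μ + ∫ ω, ‖X (n + 1) ω‖ ^ p ∂μ) := by ring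

end InnerProductSpace

theorem von_bahr_esseen_mds {Ω : Type*} [MeasurableSpace Ω] (P : Measure Ω)
    [IsProbabilityMeasure P] {d n : ℕ} (p : ℝ) (hp1 : 1 ≤ p) (hp2 : p ≤ 2)
    (X : ℕ → Ω → EuclideanSpace ℝ (Fin d))
    (hmeas : ∀ j, Measurable (X j))
    (hint : ∀ j ∈ Finset.Icc 1 n, ∫⁻ ω, ENNReal.ofReal (‖X j ω‖ ^ p) ∂P < ⊤)
    (hmds : ∀ j ∈ Finset.Icc 1 n,
      P[X j | ⨆ i ∈ Finset.Ico 1 j, MeasurableSpace.comap (X i) inferInstance] =ᵐ[P] 0) :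
    ∫ ω, ‖∑ j ∈ Finset.Icc 1 n, X j ω‖ ^ p ∂P
      ≤ 2 * ∑ j ∈ Finset.Icc 1 n, ∫ ω, ‖X j ω‖ ^ p ∂P := by
  have hp0 : 0 < p := by linarith
  refine integral_norm_sum_rpow_le hp1 hp2 X hmeas n (fun j hj ↦ ?_) hmds
  rw [← integrable_norm_rpow_iff (hmeas j).aestronglyMeasurable (by simpa using hp0)
    ENNReal.ofReal_ne_top, ENNReal.toReal_ofReal hp0.le]
  exact ⟨((hmeas j).norm.pow_const p).aestronglyMeasurable,
    (hasFiniteIntegral_iff_ofReal (ae_of_all _ fun ω ↦ by positivity)).2 (hint j hj)⟩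
end

section
/- Under the same Hölder-smoothness setting as above with constants ℓ, L and ν ∈ (1,2], let x̂^ν = argmin_{y∈𝒳}[F(y) + (ρ/ν)‖y−x‖^ν]. Then for any ρ₁ > 0 and any ρ > (ρ₁ + 2ℓ)/ν: ‖x̂^ν − x‖^ν ≤ ((ν−1)/(ν ρ₁^(1/(ν−1)))) · 𝒟_{ρ₁}^ν(x) / (ρ − (ρ₁ + 2ℓ)/ν). -/
/-!
Minimality of `x̂` along the segment towards `x` gives the first-order condition
`ρ ‖x̂ - x‖^ν ≤ ⟪∇F(x̂), x - x̂⟫`. Adding the lower Hölder bounds at `(x, x̂)` and `(x̂, x)` turns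
it into `⟪∇F(x), x̂ - x⟫ ≤ -(ρ - 2ℓ/ν) ‖x̂ - x‖^ν`, and comparing the model minimum with its
value at `x̂` gives `-(ν - 1) / (ν ρ₁^(1/(ν-1))) 𝒟_{ρ₁}^ν(x) ≤ -(ρ - (ρ₁ + 2ℓ)/ν) ‖x̂ - x‖^ν`.
-/

open scoped RealInnerProductSpace

theorem mul_rpow_norm_sub_le_inner_of_isMinOn {E : Type*} [NormedAddCommGroup E]
    [InnerProductSpace ℝ E] [CompleteSpace E] {s : Set E} (hs : Convex ℝ s) {F : E → ℝ}
    {g x x₀ : E} {ρ p : ℝ} (hp : 1 < p) (hF : HasGradientAt F g x₀) (hx : x ∈ s) (hx₀ : x₀ ∈ s)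
    (hmin : ∀ y ∈ s, F x₀ + (ρ / p) * ‖x₀ - x‖ ^ p ≤ F y + (ρ / p) * ‖y - x‖ ^ p) :
    ρ * ‖x₀ - x‖ ^ p ≤ ⟪g, x - x₀⟫ := by
  have hderiv : HasFDerivAt (fun y => F y + (ρ / p) * ‖y - x‖ ^ p)
      (InnerProductSpace.toDual ℝ E g +
        (ρ / p) • ((p * ‖x₀ - x‖ ^ (p - 2)) • innerSL ℝ (x₀ - x))) x₀ :=
    hF.hasFDerivAt.add
      (((hasFDerivAt_norm_rpow (x₀ - x) hp).comp x₀ ((hasFDerivAt_id x₀).sub_const x)).const_mul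
        (ρ / p))
  have hcone : x - x₀ ∈ posTangentConeAt s x₀ :=
    sub_mem_posTangentConeAt_of_segment_subset (hs.segment_subset hx₀ hx)
  have hfirst := (isMinOn_iff.mpr hmin).localize.hasFDerivWithinAt_nonneg
    hderiv.hasFDerivWithinAt hcone
  have hinner : ⟪x₀ - x, x - x₀⟫ = -‖x₀ - x‖ ^ 2 := by
    rw [← neg_sub x₀ x, inner_neg_right, real_inner_self_eq_norm_sq]
  simp only [add_apply, smul_apply, InnerProductSpace.toDual_apply_apply, innerSL_apply_apply,
    smul_eq_mul, hinner] at hfirst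
  calc ρ * ‖x₀ - x‖ ^ p = ρ / p * p * (‖x₀ - x‖ ^ (p - 2) * ‖x₀ - x‖ ^ 2) := by
        have hp0 : p - 2 + (2 : ℕ) ≠ 0 := by norm_num; linarith
        rw [← Real.rpow_add_natCast' (norm_nonneg _) hp0, div_mul_cancel₀ ρ (by linarith)]
        norm_num
    _ ≤ ⟪g, x - x₀⟫ := by linarith

theorem prox_point_FBE_bound_general {d : ℕ} (ν ℓ L ρ ρ₁ : ℝ) (hν1 : 1 < ν)
    (hρ₁ : 0 < ρ₁) (hρ : (ρ₁ + 2 * ℓ) / ν < ρ)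
    (𝒳 : Set (EuclideanSpace ℝ (Fin d))) (hconv : Convex ℝ 𝒳)
    (F : EuclideanSpace ℝ (Fin d) → ℝ)
    (F' : EuclideanSpace ℝ (Fin d) → EuclideanSpace ℝ (Fin d))
    (hgrad : ∀ x ∈ 𝒳, HasGradientAt F (F' x) x)
    (hHolder : ∀ x ∈ 𝒳, ∀ y ∈ 𝒳,
      -(ℓ / ν) * ‖x - y‖ ^ ν ≤ F x - F y - ⟪F' y, x - y⟫ ∧
        F x - F y - ⟪F' y, x - y⟫ ≤ (L / ν) * ‖x - y‖ ^ ν)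
    (x : EuclideanSpace ℝ (Fin d)) (hx : x ∈ 𝒳)
    -- x̂ is the order-ν proximal point of x
    (xhat : EuclideanSpace ℝ (Fin d)) (hxhat : xhat ∈ 𝒳)
    (hxhatmin : ∀ y ∈ 𝒳, F xhat + (ρ / ν) * ‖xhat - x‖ ^ ν
      ≤ F y + (ρ / ν) * ‖y - x‖ ^ ν)
    -- yQ minimizes y ↦ ⟪∇F(x), y - x⟫ + (ρ₁/ν)‖y - x‖^ν over 𝒳
    (yQ : EuclideanSpace ℝ (Fin d))
    (hyQmin : ∀ y ∈ 𝒳, ⟪F' x, yQ - x⟫ + (ρ₁ / ν) * ‖yQ - x‖ ^ ν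
      ≤ ⟪F' x, y - x⟫ + (ρ₁ / ν) * ‖y - x‖ ^ ν) :
    ‖xhat - x‖ ^ ν ≤ ((ν - 1) / (ν * ρ₁ ^ (1 / (ν - 1)))) *
        (-(ν * ρ₁ ^ (1 / (ν - 1)) / (ν - 1)) *
          (⟪F' x, yQ - x⟫ + (ρ₁ / ν) * ‖yQ - x‖ ^ ν)) / (ρ - (ρ₁ + 2 * ℓ) / ν) := by
  have hopt : ρ * ‖xhat - x‖ ^ ν ≤ ⟪F' xhat, x - xhat⟫ :=
    mul_rpow_norm_sub_le_inner_of_isMinOn hconv hν1 (hgrad xhat hxhat) hx hxhat hxhatmin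
  have hmono : ⟪F' x, xhat - x⟫ + ⟪F' xhat, x - xhat⟫ ≤ (2 * ℓ / ν) * ‖xhat - x‖ ^ ν := by
    have hx_xhat := (hHolder x hx xhat hxhat).1
    have hxhat_x := (hHolder xhat hxhat x hx).1
    rw [norm_sub_rev] at hx_xhat
    linear_combination hx_xhat + hxhat_x
  have hmodel : ⟪F' x, yQ - x⟫ + (ρ₁ / ν) * ‖yQ - x‖ ^ ν
      ≤ -((ρ - (ρ₁ + 2 * ℓ) / ν) * ‖xhat - x‖ ^ ν) := by
    have hQ := hyQmin xhat hxhat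
    rw [add_div]
    linarith
  have hscale : ∀ Q : ℝ,
      (ν - 1) / (ν * ρ₁ ^ (1 / (ν - 1))) * (-(ν * ρ₁ ^ (1 / (ν - 1)) / (ν - 1)) * Q) = -Q := by
    have : ρ₁ ^ (1 / (ν - 1)) ≠ 0 := (Real.rpow_pos_of_pos hρ₁ _).ne'
    have : ν - 1 ≠ 0 := by linarith
    intro Q
    field_simp
  rw [hscale, le_div_iff₀ (sub_pos.mpr hρ)]
  linarith

theorem prox_point_FBE_bound {d : ℕ} (ν ℓ L ρ ρ₁ : ℝ) (hν1 : 1 < ν) (hν2 : ν ≤ 2)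
    (hρ₁ : 0 < ρ₁) (hρ : (ρ₁ + 2 * ℓ) / ν < ρ)
    (𝒳 : Set (EuclideanSpace ℝ (Fin d))) (hclosed : IsClosed 𝒳) (hconv : Convex ℝ 𝒳)
    (F : EuclideanSpace ℝ (Fin d) → ℝ)
    (F' : EuclideanSpace ℝ (Fin d) → EuclideanSpace ℝ (Fin d))
    (hgrad : ∀ x ∈ 𝒳, HasGradientAt F (F' x) x)
    (hHolder : ∀ x ∈ 𝒳, ∀ y ∈ 𝒳,
      -(ℓ / ν) * ‖x - y‖ ^ ν ≤ F x - F y - ⟪F' y, x - y⟫ ∧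
        F x - F y - ⟪F' y, x - y⟫ ≤ (L / ν) * ‖x - y‖ ^ ν)
    (x : EuclideanSpace ℝ (Fin d)) (hx : x ∈ 𝒳)
    -- x̂ is the order-ν proximal point of x
    (xhat : EuclideanSpace ℝ (Fin d)) (hxhat : xhat ∈ 𝒳)
    (hxhatmin : ∀ y ∈ 𝒳, F xhat + (ρ / ν) * ‖xhat - x‖ ^ ν
      ≤ F y + (ρ / ν) * ‖y - x‖ ^ ν)
    -- yQ minimizes y ↦ ⟪∇F(x), y - x⟫ + (ρ₁/ν)‖y - x‖^ν over 𝒳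
    (yQ : EuclideanSpace ℝ (Fin d)) (hyQ : yQ ∈ 𝒳)
    (hyQmin : ∀ y ∈ 𝒳, ⟪F' x, yQ - x⟫ + (ρ₁ / ν) * ‖yQ - x‖ ^ ν
      ≤ ⟪F' x, y - x⟫ + (ρ₁ / ν) * ‖y - x‖ ^ ν) :
    ‖xhat - x‖ ^ ν ≤ ((ν - 1) / (ν * ρ₁ ^ (1 / (ν - 1)))) *
        (-(ν * ρ₁ ^ (1 / (ν - 1)) / (ν - 1)) *
          (⟪F' x, yQ - x⟫ + (ρ₁ / ν) * ‖yQ - x‖ ^ ν)) / (ρ - (ρ₁ + 2 * ℓ) / ν) :=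
  prox_point_FBE_bound_general ν ℓ L ρ ρ₁ hν1 hρ₁ hρ 𝒳 hconv F F' hgrad hHolder x hx xhat hxhat
    hxhatmin yQ hyQmin
end

section
/- Let ν ∈ (1,2], ε > 0, Δ₁ > 0, L > 0, and suppose ε^(ν/(ν−1)) ≤ (ν/(ν−1))·(Δ₁/4)·(L/2)^(1/(ν−1)). With δ_ν = (2ε/L)^(1/(ν−1)) and y* ≥ 0 satisfying 2ε·y* ≤ Δ₁/2, define F : ℝ → ℝ by F(x) = Δ₁ − 2εx for x ≤ y*, F(x) = Δ₁ − 2εx + (L/ν)(x − y*)^ν for y* < x ≤ y* + δ_ν, and F(x) = Δ₁ − 2εy* − 2εδ_ν + (L/ν)δ_ν^ν for x > y* + δ_ν. Then F is differentiable, convex, (0, L, ν)-Hölder smooth (i.e., 0 ≤ F(x) − F(y) − F'(y)(x−y) ≤ (L/ν)|x−y|^ν for all x,y), satisfies F(x) ≥ 0 for all x, and |F'(x)| = 2ε for all x ≤ y*. -/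
/-!
`F` is the primitive of `g x = L * r(x) ^ (ν - 1) - 2ε`, where `r(x)` is `x - y*` clamped to
`[0, δ_ν]`; `δ_ν` is chosen so that `g` vanishes beyond `y* + δ_ν`. The derivative `g` is
continuous and nondecreasing, which gives convexity and the lower Bregman bound, and
subadditivity of `t ↦ t ^ (ν - 1)` gives `g t - g s ≤ L (t - s) ^ (ν - 1)`, which integrates to
the upper bound. `F` is minimal at `y* + δ_ν`, where its value is
`Δ₁ - 2εy* - 2(ν-1)/ν · εδ_ν ≥ 0` by the smallness assumption on `ε`.
-/

open intervalIntegral Set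

section Bregman

variable {f g : ℝ → ℝ} {L p : ℝ}

lemma integral_mul_sub_rpow (hp : 0 ≤ p) (L a b : ℝ) :
    ∫ t in a..b, L * (t - a) ^ p = L / (p + 1) * (b - a) ^ (p + 1) := by
  rw [integral_const_mul, integral_comp_sub_right (· ^ p), sub_self,
    integral_rpow (Or.inl (by linarith)), Real.zero_rpow (by linarith)]
  ring

lemma integral_mul_rpow_sub (hp : 0 ≤ p) (L a b : ℝ) :
    ∫ t in a..b, L * (b - t) ^ p = L / (p + 1) * (b - a) ^ (p + 1) := by
  rw [integral_const_mul, integral_comp_sub_left (· ^ p), sub_self,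
    integral_rpow (Or.inl (by linarith)), Real.zero_rpow (by linarith)]
  ring

lemma sub_sub_mul_sub_eq_integral (hf : ∀ x, HasDerivAt f (g x) x) (hg : Monotone g) (x y : ℝ) :
    f x - f y - g y * (x - y) = ∫ t in y..x, (g t - g y) := by
  rw [integral_sub hg.intervalIntegrable intervalIntegrable_const, integral_const, smul_eq_mul,
    integral_eq_sub_of_hasDerivAt (fun t _ => hf t) hg.intervalIntegrable]
  ring

lemma sub_sub_mul_sub_nonneg (hf : ∀ x, HasDerivAt f (g x) x) (hg : Monotone g) (x y : ℝ) :
    0 ≤ f x - f y - g y * (x - y) := by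
  rw [sub_sub_mul_sub_eq_integral hf hg]
  rcases le_total y x with hyx | hxy
  · exact integral_nonneg hyx fun t ht => sub_nonneg.2 (hg ht.1)
  · rw [integral_symm, ← integral_neg]
    exact integral_nonneg hxy fun t ht => neg_nonneg.2 (sub_nonpos.2 (hg ht.2))

lemma sub_sub_mul_sub_le (hp : 0 ≤ p) (hf : ∀ x, HasDerivAt f (g x) x) (hg : Monotone g)
    (hgL : ∀ ⦃s t⦄, s ≤ t → g t - g s ≤ L * (t - s) ^ p) (x y : ℝ) :
    f x - f y - g y * (x - y) ≤ L / (p + 1) * |x - y| ^ (p + 1) := by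
  rw [sub_sub_mul_sub_eq_integral hf hg]
  rcases le_total y x with hyx | hxy
  · calc ∫ t in y..x, (g t - g y)
        ≤ ∫ t in y..x, L * (t - y) ^ p :=
          integral_mono_on hyx (hg.intervalIntegrable.sub intervalIntegrable_const)
            ((continuous_const.mul ((continuous_id.sub continuous_const).rpow_const
              fun _ => Or.inr hp)).intervalIntegrable _ _) fun t ht => hgL ht.1
      _ = L / (p + 1) * |x - y| ^ (p + 1) := by
          rw [integral_mul_sub_rpow hp, abs_of_nonneg (sub_nonneg.2 hyx)]
  · rw [integral_symm, ← integral_neg]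
    calc ∫ t in x..y, -(g t - g y)
        ≤ ∫ t in x..y, L * (y - t) ^ p :=
          integral_mono_on hxy (hg.intervalIntegrable.sub intervalIntegrable_const).neg
            ((continuous_const.mul ((continuous_const.sub continuous_id).rpow_const
              fun _ => Or.inr hp)).intervalIntegrable _ _)
            fun t ht => by linarith [hgL ht.2]
      _ = L / (p + 1) * |x - y| ^ (p + 1) := by
          rw [integral_mul_rpow_sub hp, abs_of_nonpos (sub_nonpos.2 hxy), neg_sub]

end Bregman

section Ramp

variable {a δ p x y : ℝ}

def ramp (a δ x : ℝ) : ℝ := min (max (x - a) 0) δ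

lemma ramp_nonneg (hδ : 0 ≤ δ) (x : ℝ) : 0 ≤ ramp a δ x :=
  le_min (le_max_right _ _) hδ

lemma ramp_monotone : Monotone (ramp a δ) := fun _ _ hxy =>
  min_le_min_right _ (max_le_max_right _ (sub_le_sub_right hxy _))

lemma ramp_sub_ramp_le (hxy : x ≤ y) : ramp a δ y - ramp a δ x ≤ y - x := by
  have hmax : max (y - a) 0 - max (x - a) 0 ≤ y - x := by
    simpa [max_eq_left (sub_nonneg.2 hxy)] using max_sub_max_le_max (y - a) 0 (x - a) 0
  unfold ramp
  rcases le_total (max (x - a) 0) δ with h | h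
  · rw [min_eq_left h]
    linarith [min_le_left (max (y - a) 0) δ]
  · rw [min_eq_right h]
    linarith [min_le_right (max (y - a) 0) δ]

lemma continuous_ramp : Continuous (ramp a δ) := by
  unfold ramp; fun_prop

lemma ramp_of_le (hδ : 0 ≤ δ) (hx : x ≤ a) : ramp a δ x = 0 := by
  rw [ramp, max_eq_right (sub_nonpos.2 hx), min_eq_left hδ]

lemma ramp_of_mem_Icc (hx : x ∈ Icc a (a + δ)) : ramp a δ x = x - a := by
  rw [ramp, max_eq_left (sub_nonneg.2 hx.1), min_eq_left (by linarith [hx.2])]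

lemma ramp_of_add_le (hδ : 0 ≤ δ) (hx : a + δ ≤ x) : ramp a δ x = δ := by
  rw [ramp, max_eq_left (by linarith), min_eq_right (by linarith)]

lemma rpow_ramp_sub_rpow_ramp_le (hδ : 0 ≤ δ) (hp0 : 0 ≤ p) (hp1 : p ≤ 1) (hxy : x ≤ y) :
    ramp a δ y ^ p - ramp a δ x ^ p ≤ (y - x) ^ p := by
  have hx := ramp_nonneg (a := a) hδ x
  have hmono := ramp_monotone (a := a) (δ := δ) hxy
  calc ramp a δ y ^ p - ramp a δ x ^ p
      ≤ (ramp a δ y - ramp a δ x) ^ p := by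
        have := Real.rpow_add_le_add_rpow hx (sub_nonneg.2 hmono) hp0 hp1
        rw [add_sub_cancel] at this
        linarith
    _ ≤ (y - x) ^ p := Real.rpow_le_rpow (sub_nonneg.2 hmono) (ramp_sub_ramp_le hxy) hp0

end Ramp

lemma mul_div_rpow_one_div_sub_one {ε c ν : ℝ} (hε : 0 < ε) (hc : 0 ≤ c) (hν : ν ≠ 1) :
    ε * (ε / c) ^ (1 / (ν - 1)) = ε ^ (ν / (ν - 1)) / c ^ (1 / (ν - 1)) := by
  have hexp : ν / (ν - 1) = 1 + 1 / (ν - 1) := by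
    field_simp [sub_ne_zero.2 hν]
    ring
  rw [Real.div_rpow hε.le hc, ← mul_div_assoc, hexp, Real.rpow_add hε, Real.rpow_one]

section HardInstance

variable {ε Δ₁ L ν a δ : ℝ}

noncomputable def hardInstance (ε Δ₁ L ν a δ x : ℝ) : ℝ :=
  if x ≤ a then Δ₁ - 2 * ε * x
  else if x ≤ a + δ then Δ₁ - 2 * ε * x + (L / ν) * (x - a) ^ ν
  else Δ₁ - 2 * ε * a - 2 * ε * δ + (L / ν) * δ ^ ν

noncomputable def hardInstanceDeriv (ε L ν a δ x : ℝ) : ℝ :=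
  L * ramp a δ x ^ (ν - 1) - 2 * ε

lemma hardInstanceDeriv_of_le (hν : 1 < ν) (hδ : 0 ≤ δ) {x : ℝ} (hx : x ≤ a) :
    hardInstanceDeriv ε L ν a δ x = -(2 * ε) := by
  rw [hardInstanceDeriv, ramp_of_le hδ hx, Real.zero_rpow (by linarith)]
  ring

lemma hardInstanceDeriv_of_add_le (hδ : 0 ≤ δ) (hLδ : L * δ ^ (ν - 1) = 2 * ε) {x : ℝ}
    (hx : a + δ ≤ x) : hardInstanceDeriv ε L ν a δ x = 0 := by
  rw [hardInstanceDeriv, ramp_of_add_le hδ hx, hLδ, sub_self]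

lemma monotone_hardInstanceDeriv (hν : 1 ≤ ν) (hL : 0 ≤ L) (hδ : 0 ≤ δ) :
    Monotone (hardInstanceDeriv ε L ν a δ) := fun x y hxy =>
  sub_le_sub_right (mul_le_mul_of_nonneg_left
    (Real.rpow_le_rpow (ramp_nonneg hδ x) (ramp_monotone hxy) (by linarith)) hL) _

lemma hardInstanceDeriv_sub_le (hν1 : 1 ≤ ν) (hν2 : ν ≤ 2) (hL : 0 ≤ L) (hδ : 0 ≤ δ) {x y : ℝ}
    (hxy : x ≤ y) :
    hardInstanceDeriv ε L ν a δ y - hardInstanceDeriv ε L ν a δ x ≤ L * (y - x) ^ (ν - 1) := by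
  have := rpow_ramp_sub_rpow_ramp_le (a := a) (p := ν - 1) hδ (by linarith) (by linarith) hxy
  have := mul_le_mul_of_nonneg_left this hL
  simp only [hardInstanceDeriv]
  linarith

lemma continuous_hardInstanceDeriv (hν : 1 ≤ ν) : Continuous (hardInstanceDeriv ε L ν a δ) := by
  unfold hardInstanceDeriv
  exact (continuous_const.mul (continuous_ramp.rpow_const fun _ => Or.inr (by linarith))).sub
    continuous_const

lemma integral_hardInstanceDeriv_of_mem_Icc (hν : 1 < ν) {x : ℝ} (hx : x ∈ Icc a (a + δ)) :
    ∫ t in a..x, hardInstanceDeriv ε L ν a δ t = (L / ν) * (x - a) ^ ν - 2 * ε * (x - a) := by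
  have hcongr : EqOn (hardInstanceDeriv ε L ν a δ) (fun t => L * (t - a) ^ (ν - 1) - 2 * ε)
      (uIcc a x) := by
    intro t ht
    rw [uIcc_of_le hx.1] at ht
    rw [hardInstanceDeriv, ramp_of_mem_Icc ⟨ht.1, ht.2.trans hx.2⟩]
  have hint : Continuous fun t : ℝ => L * (t - a) ^ (ν - 1) :=
    continuous_const.mul ((continuous_id.sub continuous_const).rpow_const
      fun _ => Or.inr (by linarith))
  rw [integral_congr hcongr, integral_sub (hint.intervalIntegrable _ _) intervalIntegrable_const,
    integral_mul_sub_rpow (by linarith), integral_const, sub_add_cancel, smul_eq_mul]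
  ring

lemma hardInstance_eq_add_integral (hν : 1 < ν) (hδ : 0 < δ) (hLδ : L * δ ^ (ν - 1) = 2 * ε)
    (x : ℝ) :
    hardInstance ε Δ₁ L ν a δ x = Δ₁ - 2 * ε * a + ∫ t in a..x, hardInstanceDeriv ε L ν a δ t := by
  have hint : ∀ b c : ℝ,
      IntervalIntegrable (hardInstanceDeriv ε L ν a δ) MeasureTheory.volume b c :=
    (continuous_hardInstanceDeriv hν.le).intervalIntegrable
  rcases le_or_gt x a with hxa | hax
  · have hcongr : EqOn (hardInstanceDeriv ε L ν a δ) (fun _ => -(2 * ε)) (uIcc a x) := by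
      intro t ht
      rw [uIcc_of_ge hxa] at ht
      exact hardInstanceDeriv_of_le hν hδ.le ht.2
    rw [hardInstance, if_pos hxa, integral_congr hcongr, integral_const, smul_eq_mul]
    ring
  rcases le_or_gt x (a + δ) with hxδ | hδx
  · rw [hardInstance, if_neg hax.not_ge, if_pos hxδ,
      integral_hardInstanceDeriv_of_mem_Icc hν ⟨hax.le, hxδ⟩]
    ring
  · have hzero : ∫ t in (a + δ)..x, hardInstanceDeriv ε L ν a δ t = 0 := by
      have hcongr : EqOn (hardInstanceDeriv ε L ν a δ) (fun _ => 0) (uIcc (a + δ) x) := by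
        intro t ht
        rw [uIcc_of_le hδx.le] at ht
        exact hardInstanceDeriv_of_add_le hδ.le hLδ ht.1
      rw [integral_congr hcongr, integral_zero]
    rw [hardInstance, if_neg hax.not_ge, if_neg hδx.not_ge,
      ← integral_add_adjacent_intervals (hint a (a + δ)) (hint _ x), hzero,
      integral_hardInstanceDeriv_of_mem_Icc hν ⟨by linarith, le_rfl⟩, add_sub_cancel_left]
    ring

lemma hasDerivAt_hardInstance (hν : 1 < ν) (hδ : 0 < δ) (hLδ : L * δ ^ (ν - 1) = 2 * ε) (x : ℝ) :
    HasDerivAt (hardInstance ε Δ₁ L ν a δ) (hardInstanceDeriv ε L ν a δ x) x := by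
  have hcont := continuous_hardInstanceDeriv (ε := ε) (L := L) (a := a) (δ := δ) hν.le
  rw [funext (hardInstance_eq_add_integral hν hδ hLδ)]
  exact (integral_hasDerivAt_right (hcont.intervalIntegrable _ _)
    (hcont.stronglyMeasurableAtFilter _ _) hcont.continuousAt).const_add _

lemma hardInstance_add (hν : 0 < ν) (hδ : 0 < δ) (hLδ : L * δ ^ (ν - 1) = 2 * ε) :
    hardInstance ε Δ₁ L ν a δ (a + δ) = Δ₁ - 2 * ε * a - 2 * ((ν - 1) / ν) * (ε * δ) := by
  have hLδν : L * δ ^ ν = 2 * ε * δ := by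
    rw [← hLδ, mul_assoc, ← Real.rpow_add_one hδ.ne', sub_add_cancel]
  rw [hardInstance, if_neg (by linarith), if_pos le_rfl, add_sub_cancel_left]
  field_simp
  linear_combination hLδν

lemma hardInstance_nonneg (hν : 1 < ν) (hL : 0 ≤ L) (hδ : 0 < δ) (hLδ : L * δ ^ (ν - 1) = 2 * ε)
    (ha : 2 * ε * a ≤ Δ₁ / 2) (hεδ : ε * δ ≤ ν / (ν - 1) * (Δ₁ / 4)) (x : ℝ) :
    0 ≤ hardInstance ε Δ₁ L ν a δ x := by
  have hmin := sub_sub_mul_sub_nonneg (hasDerivAt_hardInstance (Δ₁ := Δ₁) (a := a) hν hδ hLδ)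
    (monotone_hardInstanceDeriv hν.le hL hδ.le) x (a + δ)
  rw [hardInstanceDeriv_of_add_le hδ.le hLδ le_rfl, zero_mul, sub_zero, sub_nonneg,
    hardInstance_add (by linarith) hδ hLδ] at hmin
  have hεδ' : (ν - 1) / ν * (ε * δ) ≤ Δ₁ / 4 := by
    have hν0 : ν - 1 ≠ 0 := by linarith
    calc (ν - 1) / ν * (ε * δ) ≤ (ν - 1) / ν * (ν / (ν - 1) * (Δ₁ / 4)) :=
          mul_le_mul_of_nonneg_left hεδ (div_nonneg (by linarith) (by linarith))
      _ = Δ₁ / 4 := by field_simp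
  linarith

end HardInstance

theorem one_dim_hard_instance_general (ν ε Δ₁ L ystar : ℝ) (hν1 : 1 < ν) (hν2 : ν ≤ 2)
    (hε : 0 < ε) (hL : 0 < L)
    (hsmall : ε ^ (ν / (ν - 1)) ≤ (ν / (ν - 1)) * (Δ₁ / 4) * (L / 2) ^ (1 / (ν - 1)))
    (hy : 2 * ε * ystar ≤ Δ₁ / 2) :
    let δν : ℝ := (2 * ε / L) ^ (1 / (ν - 1))
    let F : ℝ → ℝ := fun x =>
      if x ≤ ystar then Δ₁ - 2 * ε * x
      else if x ≤ ystar + δν then Δ₁ - 2 * ε * x + (L / ν) * (x - ystar) ^ ν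
      else Δ₁ - 2 * ε * ystar - 2 * ε * δν + (L / ν) * δν ^ ν
    Differentiable ℝ F ∧
      ConvexOn ℝ Set.univ F ∧
      (∀ x y : ℝ, 0 ≤ F x - F y - deriv F y * (x - y) ∧
        F x - F y - deriv F y * (x - y) ≤ (L / ν) * |x - y| ^ ν) ∧
      (∀ x, 0 ≤ F x) ∧
      (∀ x ≤ ystar, |deriv F x| = 2 * ε) := by
  intro δν F
  have hδ : 0 < δν := by positivity
  have hLδ : L * δν ^ (ν - 1) = 2 * ε := by
    dsimp only [δν]
    rw [one_div, Real.rpow_inv_rpow (by positivity) (by linarith), mul_div_cancel₀ _ hL.ne']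
  have hεδ : ε * δν ≤ ν / (ν - 1) * (Δ₁ / 4) := by
    dsimp only [δν]
    rw [show 2 * ε / L = ε / (L / 2) by ring, mul_div_rpow_one_div_sub_one hε (by positivity)
      hν1.ne', div_le_iff₀ (by positivity)]
    exact hsmall
  have hF : ∀ x, HasDerivAt F (hardInstanceDeriv ε L ν ystar δν x) x :=
    hasDerivAt_hardInstance hν1 hδ hLδ
  have hF' : deriv F = hardInstanceDeriv ε L ν ystar δν := funext fun x => (hF x).deriv
  have hmono := monotone_hardInstanceDeriv (ε := ε) (a := ystar) hν1.le hL.le hδ.le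
  have hdiff : Differentiable ℝ F := fun x => (hF x).differentiableAt
  refine ⟨hdiff, Monotone.convexOn_univ_of_deriv hdiff (hF' ▸ hmono), fun x y => ?_,
    hardInstance_nonneg hν1 hL.le hδ hLδ hy hεδ, fun x hx => ?_⟩
  · rw [hF']
    refine ⟨sub_sub_mul_sub_nonneg hF hmono x y, ?_⟩
    simpa only [sub_add_cancel] using sub_sub_mul_sub_le (by linarith) hF hmono
      (fun _ _ => hardInstanceDeriv_sub_le hν1.le hν2 hL.le hδ.le) x y
  · rw [hF', hardInstanceDeriv_of_le hν1 hδ.le hx, abs_neg, abs_of_pos (by positivity)]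

theorem one_dim_hard_instance (ν ε Δ₁ L ystar : ℝ) (hν1 : 1 < ν) (hν2 : ν ≤ 2)
    (hε : 0 < ε) (hΔ : 0 < Δ₁) (hL : 0 < L)
    (hsmall : ε ^ (ν / (ν - 1)) ≤ (ν / (ν - 1)) * (Δ₁ / 4) * (L / 2) ^ (1 / (ν - 1)))
    (hy0 : 0 ≤ ystar) (hy : 2 * ε * ystar ≤ Δ₁ / 2) :
    let δν : ℝ := (2 * ε / L) ^ (1 / (ν - 1))
    let F : ℝ → ℝ := fun x =>
      if x ≤ ystar then Δ₁ - 2 * ε * x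
      else if x ≤ ystar + δν then Δ₁ - 2 * ε * x + (L / ν) * (x - ystar) ^ ν
      else Δ₁ - 2 * ε * ystar - 2 * ε * δν + (L / ν) * δν ^ ν
    Differentiable ℝ F ∧
      ConvexOn ℝ Set.univ F ∧
      (∀ x y : ℝ, 0 ≤ F x - F y - deriv F y * (x - y) ∧
        F x - F y - deriv F y * (x - y) ≤ (L / ν) * |x - y| ^ ν) ∧
      (∀ x, 0 ≤ F x) ∧
      (∀ x ≤ ystar, |deriv F x| = 2 * ε) :=
  one_dim_hard_instance_general ν ε Δ₁ L ystar hν1 hν2 hε hL hsmall hy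
end
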